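/- arXiv:2408.08418 — 5 statements merged into one kernel-verified Lean document; each statement's English description precedes it below -/
import Mathlib

section
/- A set D ⊆ V(G) is an efficient dominating set of G with D ∩ S = S' if and only if there exist vertices v_1 ∈ V(C_1), …, v_p ∈ V(C_p) such that: (i) D = S' ∪ {v_1, …, v_p}; (ii) U is the disjoint union of the sets N[v_i] ∩ U for i = 1, …, p; and (iii) for every i ∈ {1, …, p}, V(C_i) ⊆ N[v_i] ∪ N[S'] and N[v_i] ∩ N[S'] = ∅. -/
/-- The closed neighborhood `N[v]` of a vertex `v`. -/
def closedNbhd {V : Type*} (G : SimpleGraph V) (v : V) : Set V :=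
  {w | G.Adj v w ∨ w = v}

/-- The closed neighborhood `N[X] = ⋃_{v ∈ X} N[v]` of a set of vertices. -/
def closedNbhdSet {V : Type*} (G : SimpleGraph V) (X : Set V) : Set V :=
  ⋃ v ∈ X, closedNbhd G v

/-- `D` is an efficient dominating set of `G`: every vertex has exactly one
element of `D` in its closed neighborhood, i.e. `|N[v] ∩ D| = 1`. -/
def IsEDS {V : Type*} (G : SimpleGraph V) (D : Set V) : Prop :=
  ∀ v : V, ∃! u : V, u ∈ D ∧ u ∈ closedNbhd G v

/-- The graph `G - S`: the graph obtained from `G` by deleting the vertices of `S`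
(kept on the same vertex type; vertices of `S` become isolated). -/
def deleteSet {V : Type*} (G : SimpleGraph V) (S : Set V) : SimpleGraph V where
  Adj v w := G.Adj v w ∧ v ∉ S ∧ w ∉ S
  symm := by
    constructor
    intro v w h
    exact ⟨h.1.symm, h.2.2, h.2.1⟩
  loopless := by
    constructor
    intro v h
    exact G.irrefl h.1

/-!
Each component `C i` of `G - S` has diameter at most 2, so any two of its vertices have a common
closed neighbor; hence an efficient dominating set `D` meets it in at most one vertex, and in
exactly one because some vertex of `C i` outside `N[S']` must be dominated from inside `C i`.
So `D = S' ∪ {v i}`. For a set of this shape, domination and uniqueness are checked vertex by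
vertex on the partition `V = N[S'] ∪ U ∪ ⋃ (C i \ N[S'])`: the vertices of `U` are exactly
the ones handled by condition (ii), those of the components by condition (iii), and a vertex
outside `S` can only be dominated from its own component.
-/

section

open Function

variable {V : Type*} {G : SimpleGraph V}

theorem mem_closedNbhd_comm {v w : V} : w ∈ closedNbhd G v ↔ v ∈ closedNbhd G w := by
  show G.Adj v w ∨ w = v ↔ G.Adj w v ∨ v = w
  rw [G.adj_comm, eq_comm]

theorem self_mem_closedNbhd (v : V) : v ∈ closedNbhd G v := Or.inr rfl

theorem mem_closedNbhdSet {X : Set V} {w : V} :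
    w ∈ closedNbhdSet G X ↔ ∃ s ∈ X, w ∈ closedNbhd G s := by
  simp [closedNbhdSet]

theorem mem_closedNbhdSet_of_mem {X : Set V} {s w : V} (hs : s ∈ X) (hw : w ∈ closedNbhd G s) :
    w ∈ closedNbhdSet G X :=
  mem_closedNbhdSet.2 ⟨s, hs, hw⟩

theorem closedNbhd_inter_nonempty_of_deleteSet {S : Set V} {a b : V}
    (h : a = b ∨ (deleteSet G S).Adj a b ∨
      ∃ x, (deleteSet G S).Adj a x ∧ (deleteSet G S).Adj x b) :
    (closedNbhd G a ∩ closedNbhd G b).Nonempty := by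
  rcases h with rfl | hab | ⟨x, hax, hxb⟩
  · exact ⟨a, self_mem_closedNbhd a, self_mem_closedNbhd a⟩
  · exact ⟨b, Or.inl hab.1, self_mem_closedNbhd b⟩
  · exact ⟨x, Or.inl hax.1, Or.inl hxb.1.symm⟩

namespace IsEDS

variable {D : Set V}

theorem exists_mem_closedNbhd (hD : IsEDS G D) (w : V) : ∃ d ∈ D, w ∈ closedNbhd G d :=
  let ⟨d, ⟨hd, hwd⟩, _⟩ := hD w
  ⟨d, hd, mem_closedNbhd_comm.1 hwd⟩

theorem eq_of_mem_closedNbhd (hD : IsEDS G D) {d e w : V} (hd : d ∈ D) (he : e ∈ D)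
    (hwd : w ∈ closedNbhd G d) (hwe : w ∈ closedNbhd G e) : d = e :=
  (hD w).unique ⟨hd, mem_closedNbhd_comm.1 hwd⟩ ⟨he, mem_closedNbhd_comm.1 hwe⟩

theorem of_exists_of_eq (hex : ∀ w, ∃ d ∈ D, w ∈ closedNbhd G d)
    (heq : ∀ w, ∀ d ∈ D, ∀ e ∈ D, w ∈ closedNbhd G d → w ∈ closedNbhd G e → d = e) :
    IsEDS G D := fun w =>
  let ⟨d, hd, hwd⟩ := hex w
  ⟨d, ⟨hd, mem_closedNbhd_comm.1 hwd⟩, fun e ⟨he, hwe⟩ =>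
    heq w e he d hd (mem_closedNbhd_comm.2 hwe) hwd⟩

end IsEDS

structure IsNbhdClosedPartition {ι : Type*} (G : SimpleGraph V) (S : Set V) (C : ι → Set V) :
    Prop where
  iUnion_eq_compl : ⋃ i, C i = Sᶜ
  pairwise_disjoint : Pairwise (Disjoint on C)
  mem_of_mem_closedNbhd : ∀ i, ∀ a ∈ C i, ∀ b ∉ S, b ∈ closedNbhd G a → b ∈ C i

/-- Conditions (ii) and (iii) on a choice of one vertex `v i` in each `C i`. -/
def IsEDSCompletion {ι : Type*} (G : SimpleGraph V) (S' U : Set V) (C : ι → Set V)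
    (v : ι → V) : Prop :=
  (U = ⋃ i, (closedNbhd G (v i) ∩ U)) ∧
    (∀ i j, i ≠ j → (closedNbhd G (v i) ∩ U) ∩ (closedNbhd G (v j) ∩ U) = ∅) ∧
    (∀ i, C i ⊆ closedNbhd G (v i) ∪ closedNbhdSet G S' ∧
      closedNbhd G (v i) ∩ closedNbhdSet G S' = ∅)

namespace IsNbhdClosedPartition

variable {ι : Type*} {S : Set V} {C : ι → Set V}

theorem of_connectedComponent
    (hCcomp : ∀ i, ∃ K : (deleteSet G S).ConnectedComponent, C i = K.supp)
    (hCcover : ⋃ i, C i = Sᶜ) (hCdisj : ∀ i j, i ≠ j → C i ∩ C j = ∅) :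
    IsNbhdClosedPartition G S C where
  iUnion_eq_compl := hCcover
  pairwise_disjoint i j hij := Set.disjoint_iff_inter_eq_empty.2 (hCdisj i j hij)
  mem_of_mem_closedNbhd i a ha b hb hab := by
    have haS : a ∈ Sᶜ := hCcover ▸ Set.mem_iUnion_of_mem i ha
    obtain ⟨K, hK⟩ := hCcomp i
    rw [hK, SimpleGraph.ConnectedComponent.mem_supp_iff] at ha ⊢
    rcases hab with hadj | rfl
    · have hadj' : (deleteSet G S).Adj a b := ⟨hadj, haS, hb⟩
      rw [← ha]
      exact (SimpleGraph.ConnectedComponent.sound hadj'.reachable).symm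
    · exact ha

theorem notMem (hP : IsNbhdClosedPartition G S C) {i : ι} {a : V} (ha : a ∈ C i) : a ∉ S :=
  (hP.iUnion_eq_compl ▸ Set.mem_iUnion_of_mem i ha : a ∈ Sᶜ)

theorem exists_mem (hP : IsNbhdClosedPartition G S C) {a : V} (ha : a ∉ S) : ∃ i, a ∈ C i :=
  Set.mem_iUnion.1 (hP.iUnion_eq_compl ▸ ha)

theorem eq_of_mem (hP : IsNbhdClosedPartition G S C) {i j : ι} {a : V} (hi : a ∈ C i)
    (hj : a ∈ C j) : i = j := by
  by_contra hij
  exact Set.disjoint_left.1 (hP.pairwise_disjoint hij) hi hj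

theorem union_range_inter_eq (hP : IsNbhdClosedPartition G S C) {S' : Set V} {v : ι → V}
    (hS'S : S' ⊆ S) (hvC : ∀ i, v i ∈ C i) : (S' ∪ Set.range v) ∩ S = S' := by
  have hv : Set.range v ∩ S = ∅ :=
    Set.eq_empty_of_forall_notMem fun _ ⟨⟨i, hi⟩, hS⟩ => hP.notMem (hvC i) (hi ▸ hS)
  rw [Set.union_inter_distrib_right, Set.inter_eq_left.2 hS'S, hv, Set.union_empty]

theorem exists_eq_union_range (hP : IsNbhdClosedPartition G S C) {S' D : Set V}
    (hD : IsEDS G D) (hDS : D ∩ S = S')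
    (hdiam : ∀ i, ∀ a ∈ C i, ∀ b ∈ C i, (closedNbhd G a ∩ closedNbhd G b).Nonempty)
    (hCnot : ∀ i, ¬ C i ⊆ closedNbhdSet G S') :
    ∃ v : ι → V, (∀ i, v i ∈ C i) ∧ D = S' ∪ Set.range v := by
  have hex : ∀ i, ∃ d ∈ D, d ∈ C i := by
    intro i
    obtain ⟨w, hwC, hw⟩ := Set.not_subset.1 (hCnot i)
    obtain ⟨d, hd, hwd⟩ := hD.exists_mem_closedNbhd w
    have hdS : d ∉ S := fun hdS => hw (mem_closedNbhdSet_of_mem (hDS ▸ ⟨hd, hdS⟩) hwd)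
    exact ⟨d, hd, hP.mem_of_mem_closedNbhd i w hwC d hdS (mem_closedNbhd_comm.1 hwd)⟩
  choose v hvD hvC using hex
  have huniq : ∀ i, ∀ d ∈ D, d ∈ C i → d = v i := fun i d hd hdC =>
    let ⟨_, hxd, hxv⟩ := hdiam i d hdC (v i) (hvC i)
    hD.eq_of_mem_closedNbhd hd (hvD i) hxd hxv
  refine ⟨v, hvC, Set.Subset.antisymm (fun d hd => ?_)
    (Set.union_subset (hDS ▸ Set.inter_subset_left) (Set.range_subset_iff.2 hvD))⟩
  by_cases hdS : d ∈ S
  · exact Or.inl (hDS ▸ ⟨hd, hdS⟩)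
  · obtain ⟨i, hdC⟩ := hP.exists_mem hdS
    exact Or.inr ⟨i, (huniq i d hd hdC).symm⟩

theorem isEDSCompletion_of_isEDS (hP : IsNbhdClosedPartition G S C) {S' U : Set V}
    {v : ι → V} (hS'S : S' ⊆ S) (hU : U = S \ closedNbhdSet G S') (hvC : ∀ i, v i ∈ C i)
    (hD : IsEDS G (S' ∪ Set.range v)) : IsEDSCompletion G S' U C v := by
  subst hU
  have hvD : ∀ i, v i ∈ S' ∪ Set.range v := fun i => Or.inr ⟨i, rfl⟩
  have hdom : ∀ w ∉ closedNbhdSet G S', ∃ i, w ∈ closedNbhd G (v i) := by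
    intro w hw
    obtain ⟨d, hd | ⟨i, rfl⟩, hwd⟩ := hD.exists_mem_closedNbhd w
    · exact absurd (mem_closedNbhdSet_of_mem hd hwd) hw
    · exact ⟨i, hwd⟩
  refine ⟨?_, fun i j hij => ?_, fun i => ⟨fun w hwC => ?_, ?_⟩⟩
  · refine Set.Subset.antisymm (fun u hu => ?_)
      (Set.iUnion_subset fun _ => Set.inter_subset_right)
    obtain ⟨i, hui⟩ := hdom u hu.2
    exact Set.mem_iUnion.2 ⟨i, hui, hu⟩
  · refine Set.eq_empty_of_forall_notMem fun w ⟨⟨hwi, _⟩, hwj, _⟩ => hij ?_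
    exact hP.eq_of_mem (hvC i) (hD.eq_of_mem_closedNbhd (hvD i) (hvD j) hwi hwj ▸ hvC j)
  · by_cases hw : w ∈ closedNbhdSet G S'
    · exact Or.inr hw
    · obtain ⟨j, hwj⟩ := hdom w hw
      have hwCj := hP.mem_of_mem_closedNbhd j (v j) (hvC j) w (hP.notMem hwC) hwj
      exact Or.inl (hP.eq_of_mem hwC hwCj ▸ hwj)
  · refine Set.eq_empty_of_forall_notMem fun w ⟨hwv, hw⟩ => ?_
    obtain ⟨s, hs, hws⟩ := mem_closedNbhdSet.1 hw
    exact hP.notMem (hvC i) (hS'S (hD.eq_of_mem_closedNbhd (hvD i) (Or.inl hs) hwv hws ▸ hs))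

theorem isEDS_of_isEDSCompletion (hP : IsNbhdClosedPartition G S C) {S' U : Set V}
    {v : ι → V}
    (hS'disj : ∀ s ∈ S', ∀ t ∈ S', s ≠ t → closedNbhd G s ∩ closedNbhd G t = ∅)
    (hU : U = S \ closedNbhdSet G S') (hvC : ∀ i, v i ∈ C i)
    (hv : IsEDSCompletion G S' U C v) : IsEDS G (S' ∪ Set.range v) := by
  subst hU
  obtain ⟨hcover, hdisj, hC⟩ := hv
  have hvD : ∀ i, v i ∈ S' ∪ Set.range v := fun i => Or.inr ⟨i, rfl⟩
  refine IsEDS.of_exists_of_eq (fun w => ?_) (fun w d hd e he hwd hwe => ?_)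
  · by_cases hw : w ∈ closedNbhdSet G S'
    · obtain ⟨s, hs, hws⟩ := mem_closedNbhdSet.1 hw
      exact ⟨s, Or.inl hs, hws⟩
    by_cases hwS : w ∈ S
    · have hwU : w ∈ S \ closedNbhdSet G S' := ⟨hwS, hw⟩
      rw [hcover] at hwU
      obtain ⟨i, hwi, -⟩ := Set.mem_iUnion.1 hwU
      exact ⟨v i, hvD i, hwi⟩
    · obtain ⟨i, hwC⟩ := hP.exists_mem hwS
      exact ⟨v i, hvD i, ((hC i).1 hwC).resolve_right hw⟩
  have hvi_unique : ∀ i, ∀ e ∈ S' ∪ Set.range v, w ∈ closedNbhd G (v i) →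
      w ∈ closedNbhd G e → v i = e := by
    intro i e he hwi hwe
    have hw : w ∉ closedNbhdSet G S' := fun hw => (hC i).2.subset ⟨hwi, hw⟩
    obtain he | ⟨j, rfl⟩ := he
    · exact absurd (mem_closedNbhdSet_of_mem he hwe) hw
    by_cases hij : i = j
    · rw [hij]
    exfalso
    by_cases hwS : w ∈ S
    · exact (hdisj i j hij).subset ⟨⟨hwi, hwS, hw⟩, hwe, hwS, hw⟩
    · exact hij (hP.eq_of_mem (hP.mem_of_mem_closedNbhd i _ (hvC i) w hwS hwi)
        (hP.mem_of_mem_closedNbhd j _ (hvC j) w hwS hwe))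
  obtain hd | ⟨i, rfl⟩ := hd
  · obtain he | ⟨j, rfl⟩ := he
    · by_contra hne
      exact (hS'disj d hd e he hne).subset ⟨hwd, hwe⟩
    · exact (hvi_unique j d (Or.inl hd) hwe hwd).symm
  · exact hvi_unique i e he hwd hwe

end IsNbhdClosedPartition

end

theorem eds_partial_solution_extension_general {V : Type*} (G : SimpleGraph V)
    (p : ℕ) (S S' U D : Set V) (C : Fin p → Set V)
    (hS'S : S' ⊆ S)
    (hS'disj : ∀ s ∈ S', ∀ t ∈ S', s ≠ t → closedNbhd G s ∩ closedNbhd G t = ∅)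
    (hU : U = S \ closedNbhdSet G S')
    (hCcomp : ∀ i, ∃ K : (deleteSet G S).ConnectedComponent, C i = K.supp)
    (hCcover : (⋃ i, C i) = Sᶜ)
    (hCdisj : ∀ i j, i ≠ j → C i ∩ C j = ∅)
    (hCdiam : ∀ i, ∀ v ∈ C i, ∀ w ∈ C i,
      v = w ∨ (deleteSet G S).Adj v w ∨
        ∃ x, (deleteSet G S).Adj v x ∧ (deleteSet G S).Adj x w)
    (hCnot : ∀ i, ¬ (C i ⊆ closedNbhdSet G S')) :
    (IsEDS G D ∧ D ∩ S = S') ↔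
      ∃ v : Fin p → V, (∀ i, v i ∈ C i) ∧
        D = S' ∪ Set.range v ∧
        (U = ⋃ i, (closedNbhd G (v i) ∩ U)) ∧
        (∀ i j, i ≠ j →
          (closedNbhd G (v i) ∩ U) ∩ (closedNbhd G (v j) ∩ U) = ∅) ∧
        (∀ i, C i ⊆ closedNbhd G (v i) ∪ closedNbhdSet G S' ∧
          closedNbhd G (v i) ∩ closedNbhdSet G S' = ∅) := by
  have hP := IsNbhdClosedPartition.of_connectedComponent hCcomp hCcover hCdisj
  constructor
  · rintro ⟨hD, hDS⟩
    obtain ⟨v, hvC, rfl⟩ := hP.exists_eq_union_range hD hDS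
      (fun i a ha b hb => closedNbhd_inter_nonempty_of_deleteSet (hCdiam i a ha b hb)) hCnot
    exact ⟨v, hvC, rfl, hP.isEDSCompletion_of_isEDS hS'S hU hvC hD⟩
  · rintro ⟨v, hvC, rfl, hv⟩
    exact ⟨hP.isEDS_of_isEDSCompletion hS'disj hU hvC hv,
      hP.union_range_inter_eq hS'S hvC⟩

/-- Setup: `S ⊆ V(G)` is such that the connected components of `G - S` are
`C 0, …, C (p-1)`, each of diameter at most 2; `S' ⊆ S` has pairwise disjoint closed
neighborhoods; `U = S \ N[S']`, and no `C i` is contained in `N[S']`.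
Then `D ⊆ V(G)` is an efficient dominating set of `G` with `D ∩ S = S'` if and only
if there exist vertices `v i ∈ C i` such that:
(i) `D = S' ∪ {v 0, …, v (p-1)}`;
(ii) `U` is the disjoint union of the sets `N[v i] ∩ U`;
(iii) for every `i`, `C i ⊆ N[v i] ∪ N[S']` and `N[v i] ∩ N[S'] = ∅`. -/
theorem eds_partial_solution_extension {V : Type*} [Fintype V] (G : SimpleGraph V)
    (p : ℕ) (S S' U D : Set V) (C : Fin p → Set V)
    (hS'S : S' ⊆ S)
    (hS'disj : ∀ s ∈ S', ∀ t ∈ S', s ≠ t → closedNbhd G s ∩ closedNbhd G t = ∅)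
    (hU : U = S \ closedNbhdSet G S')
    (hCcomp : ∀ i, ∃ K : (deleteSet G S).ConnectedComponent, C i = K.supp)
    (hCS : ∀ i, C i ∩ S = ∅)
    (hCcover : (⋃ i, C i) = Sᶜ)
    (hCdisj : ∀ i j, i ≠ j → C i ∩ C j = ∅)
    (hCdiam : ∀ i, ∀ v ∈ C i, ∀ w ∈ C i,
      v = w ∨ (deleteSet G S).Adj v w ∨
        ∃ x, (deleteSet G S).Adj v x ∧ (deleteSet G S).Adj x w)
    (hCnot : ∀ i, ¬ (C i ⊆ closedNbhdSet G S')) :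
    (IsEDS G D ∧ D ∩ S = S') ↔
      ∃ v : Fin p → V, (∀ i, v i ∈ C i) ∧
        D = S' ∪ Set.range v ∧
        (U = ⋃ i, (closedNbhd G (v i) ∩ U)) ∧
        (∀ i j, i ≠ j →
          (closedNbhd G (v i) ∩ U) ∩ (closedNbhd G (v j) ∩ U) = ∅) ∧
        (∀ i, C i ⊆ closedNbhd G (v i) ∪ closedNbhdSet G S' ∧
          closedNbhd G (v i) ∩ closedNbhdSet G S' = ∅) :=
  eds_partial_solution_extension_general G p S S' U D C hS'S hS'disj hU hCcomp hCcover hCdisj hCdiam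
    hCnot
end

section
/- Let G be a graph whose vertex set is partitioned into nonempty color classes C_1, …, C_k, and let G' be the graph obtained from G by the multicolored-independent-set construction. Then every two vertices of G' are at distance at most 2 in G', i.e., G' is a 2-club. -/
/-- Vertices of the graph `G'` of the multicolored-independent-set construction:
the original vertices of `G`, the vertices `x_i` and `y_i` for each color `i`,
the four vertices `vx`, `v̄x`, `vy`, `v̄y`, the vertices `x_i y_j` (for `i ≠ j`,
with a Boolean distinguishing `x_i y_j` from its overlined copy), and the
vertex `u` (called `hub` here). -/
inductive MCVert (V : Type*) (k : ℕ) where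
  | orig : V → MCVert V k
  | x : Fin k → MCVert V k
  | y : Fin k → MCVert V k
  | vx : MCVert V k
  | vxbar : MCVert V k
  | vy : MCVert V k
  | vybar : MCVert V k
  | xy : (i j : Fin k) → i ≠ j → Bool → MCVert V k
  | hub : MCVert V k

open MCVert in
/-- One direction of each edge of the multicolored-independent-set construction,
for a graph `G` colored by `c : V → Fin k` (the color class `C_i` is `c ⁻¹ {i}`):
each class becomes a clique (keeping the edges of `G`); `x_i` and `y_i` are joined
to all vertices of `C_i`; `vx, v̄x, vy, v̄y` are joined to all original vertices;
`vx, v̄x` are joined to every `x_i` and `vy, v̄y` to every `y_i`; `x_i y_j` and its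
overlined copy are joined to `x_i` and `y_j`; any two central vertices are joined
except `{vx, v̄x}`, `{vy, v̄y}` and `{x_i y_j, overline(x_i y_j)}`; and `u = hub`
is joined to all central vertices. -/
def mcRel {V : Type*} {k : ℕ} (G : SimpleGraph V) (c : V → Fin k) :
    MCVert V k → MCVert V k → Prop
  | orig v, orig w => G.Adj v w ∨ c v = c w
  | orig v, x i => c v = i
  | orig v, y i => c v = i
  | orig _, vx => True
  | orig _, vxbar => True
  | orig _, vy => True
  | orig _, vybar => True
  | x _, vx => True
  | x _, vxbar => True
  | y _, vy => True
  | y _, vybar => True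
  | x i, xy i' _ _ _ => i = i'
  | y j, xy _ j' _ _ => j = j'
  | vx, vy => True
  | vx, vybar => True
  | vxbar, vy => True
  | vxbar, vybar => True
  | vx, xy _ _ _ _ => True
  | vxbar, xy _ _ _ _ => True
  | vy, xy _ _ _ _ => True
  | vybar, xy _ _ _ _ => True
  | xy i j _ _, xy i' j' _ _ => i ≠ i' ∨ j ≠ j'
  | vx, hub => True
  | vxbar, hub => True
  | vy, hub => True
  | vybar, hub => True
  | xy _ _ _ _, hub => True
  | _, _ => False

/-- The graph `G'` of the multicolored-independent-set construction. -/
def mcGraph {V : Type*} {k : ℕ} (G : SimpleGraph V) (c : V → Fin k) :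
    SimpleGraph (MCVert V k) :=
  SimpleGraph.fromRel (mcRel G c)

/-- Let `G` be a graph whose vertex set is partitioned into nonempty color classes
`C_1, …, C_k` (given by a surjective coloring `c`), and let `G'` be the graph
obtained from `G` by the multicolored-independent-set construction. Then every two
vertices of `G'` are at distance at most 2 in `G'`, i.e., `G'` is a 2-club. -/
theorem mcGraph_two_club {V : Type*} [Fintype V] {k : ℕ}
    (G : SimpleGraph V) (c : V → Fin k) (hc : Function.Surjective c) :
    ∀ a b : MCVert V k, a = b ∨ (mcGraph G c).Adj a b ∨
      ∃ w : MCVert V k, (mcGraph G c).Adj a w ∧ (mcGraph G c).Adj w b := by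
  intro a b
  have hxy : ∀ i j : Fin k, ∃ w, (mcGraph G c).Adj (MCVert.x i) w ∧
      (mcGraph G c).Adj w (MCVert.y j) := by
    intro i j
    by_cases h : i = j
    · subst h
      obtain ⟨v, hv⟩ := hc i
      exact ⟨MCVert.orig v, by simp [mcGraph, SimpleGraph.fromRel_adj, mcRel, hv],
        by simp [mcGraph, SimpleGraph.fromRel_adj, mcRel, hv]⟩
    · exact ⟨MCVert.xy i j h true, by simp [mcGraph, SimpleGraph.fromRel_adj, mcRel],
        by simp [mcGraph, SimpleGraph.fromRel_adj, mcRel]⟩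
  cases a <;> cases b <;>
    first
      | (refine Or.inr (Or.inl ?_); simp [mcGraph, SimpleGraph.fromRel_adj, mcRel]; done)
      | (refine Or.inr (Or.inr ⟨MCVert.vx, ?_, ?_⟩) <;>
          simp [mcGraph, SimpleGraph.fromRel_adj, mcRel] <;> done)
      | (refine Or.inr (Or.inr ⟨MCVert.vy, ?_, ?_⟩) <;>
          simp [mcGraph, SimpleGraph.fromRel_adj, mcRel] <;> done)
      | exact Or.inr (Or.inr (hxy _ _))
      | exact Or.inr (Or.inr (let ⟨w, h1, h2⟩ := hxy _ _; ⟨w, h2.symm, h1.symm⟩))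
end

section
/- Let G be a graph whose vertex set is partitioned into nonempty color classes C_1, …, C_k, and let G' be the graph obtained from G by the multicolored-independent-set construction. Then G has an independent set containing exactly one vertex from each color class C_1, …, C_k if and only if G' has an independent dominating set of size at most k+1. -/
open MCVert

/-- Color tag of a vertex of the construction. -/
def mcCol {V : Type*} {k : ℕ} (c : V → Fin k) : MCVert V k → Option (Fin k)
  | orig v => some (c v)
  | x i => some i
  | y i => some i
  | _ => none

lemma mc_adj {V : Type*} {k : ℕ} {G : SimpleGraph V} {c : V → Fin k}
    {a b : MCVert V k} :
    (mcGraph G c).Adj a b ↔ a ≠ b ∧ (mcRel G c a b ∨ mcRel G c b a) :=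
  SimpleGraph.fromRel_adj _ _ _

lemma mc_final {V : Type*} {k : ℕ} {c : V → Fin k} {D : Set (MCVert V k)}
    (hfin : D.Finite) (hcard : D.ncard ≤ k + 1)
    (Q : Fin k → MCVert V k → Prop)
    (hQcol : ∀ m e, Q m e → mcCol c e = some m)
    (hall : ∀ m, ∃ e ∈ D, Q m e)
    (a b : MCVert V k) (ha : a ∈ D) (hb : b ∈ D) (hab : a ≠ b)
    (hQa : ∀ m e, Q m e → e ≠ a) (hQb : ∀ m e, Q m e → e ≠ b) : False := by
  choose g hgD hgQ using hall
  have hcol : ∀ m, mcCol c (g m) = some m := fun m => hQcol m _ (hgQ m)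
  have hinj : Function.Injective g := by
    intro m m' h
    have h1 := hcol m
    rw [h, hcol m'] at h1
    exact (Option.some_injective _ h1).symm
  have hbr : b ∉ Set.range g := by
    rintro ⟨m, rfl⟩; exact hQb m _ (hgQ m) rfl
  have har : a ∉ insert b (Set.range g) := by
    rintro (rfl | ⟨m, rfl⟩)
    · exact hab rfl
    · exact hQa m _ (hgQ m) rfl
  have hsub : insert a (insert b (Set.range g)) ⊆ D := by
    rintro t (rfl | rfl | ⟨m, rfl⟩)
    · exact ha
    · exact hb
    · exact hgD m
  have hk : (Set.range g).ncard = k := by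
    rw [← Set.image_univ, Set.ncard_image_of_injective _ hinj, Set.ncard_univ]
    simp
  have h2 : k + 2 ≤ D.ncard := by
    have e1 : (insert a (insert b (Set.range g))).ncard = k + 2 := by
      rw [Set.ncard_insert_of_notMem har (((Set.finite_range g).insert b)),
        Set.ncard_insert_of_notMem hbr (Set.finite_range g), hk]
    calc k + 2 = (insert a (insert b (Set.range g))).ncard := e1.symm
      _ ≤ D.ncard := Set.ncard_le_ncard hsub hfin
  omega
section Cases

variable {V : Type*} {k : ℕ} {G : SimpleGraph V} {c : V → Fin k} {D : Set (MCVert V k)}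

lemma mc_case_vx
    (hdom : ∀ t : MCVert V k, ∃ u ∈ D, u = t ∨ (mcGraph G c).Adj u t)
    (hind : ∀ a ∈ D, ∀ b ∈ D, a ≠ b → ¬ (mcGraph G c).Adj a b)
    (hfin : D.Finite) (hcard : D.ncard ≤ k + 1)
    (h : vx ∈ D ∨ vxbar ∈ D) : False := by
  have hnadj : ∀ a ∈ D, ∀ b ∈ D, ¬(mcGraph G c).Adj a b :=
    fun a ha b hb hab => hind a ha b hb hab.ne hab
  have hni : ∀ t, (mcGraph G c).Adj t vx → (mcGraph G c).Adj t vxbar → t ∉ D := by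
    intro t h1 h2 ht
    rcases h with h | h
    · exact hnadj t ht vx h h1
    · exact hnadj t ht vxbar h h2
  have horig : ∀ v, orig v ∉ D := fun v =>
    hni _ (by simp [mc_adj, mcRel]) (by simp [mc_adj, mcRel])
  have hx : ∀ i, MCVert.x i ∉ D := fun i =>
    hni _ (by simp [mc_adj, mcRel]) (by simp [mc_adj, mcRel])
  have hvy : (vy : MCVert V k) ∉ D :=
    hni _ (by simp [mc_adj, mcRel]) (by simp [mc_adj, mcRel])
  have hvybar : (vybar : MCVert V k) ∉ D :=
    hni _ (by simp [mc_adj, mcRel]) (by simp [mc_adj, mcRel])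
  have hxy : ∀ i j hij b, (xy i j hij b : MCVert V k) ∉ D := fun i j hij b =>
    hni _ (by simp [mc_adj, mcRel]) (by simp [mc_adj, mcRel])
  have hhub : (hub : MCVert V k) ∉ D :=
    hni _ (by simp [mc_adj, mcRel]) (by simp [mc_adj, mcRel])
  have hvx : (vx : MCVert V k) ∈ D := by
    obtain ⟨e, heD, he⟩ := hdom vx
    rcases he with rfl | he
    · exact heD
    · exfalso
      rw [mc_adj] at he
      obtain ⟨hne, hrel⟩ := he
      cases e <;> simp [mcRel] at hrel
      · exact horig _ heD
      · exact hx _ heD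
      · exact hvy heD
      · exact hvybar heD
      · exact hxy _ _ _ _ heD
      · exact hhub heD
  have hvxbar : (vxbar : MCVert V k) ∈ D := by
    obtain ⟨e, heD, he⟩ := hdom vxbar
    rcases he with rfl | he
    · exact heD
    · exfalso
      rw [mc_adj] at he
      obtain ⟨hne, hrel⟩ := he
      cases e <;> simp [mcRel] at hrel
      · exact horig _ heD
      · exact hx _ heD
      · exact hvy heD
      · exact hvybar heD
      · exact hxy _ _ _ _ heD
      · exact hhub heD
  have hym : ∀ m, (y m : MCVert V k) ∈ D := by
    intro m
    obtain ⟨e, heD, he⟩ := hdom (y m)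
    rcases he with rfl | he
    · exact heD
    · exfalso
      rw [mc_adj] at he
      obtain ⟨hne, hrel⟩ := he
      cases e <;> simp [mcRel] at hrel
      · exact horig _ heD
      · exact hvy heD
      · exact hvybar heD
      · exact hxy _ _ _ _ heD
  have q1 : ∀ m (e : MCVert V k), e = y m → mcCol c e = some m := by
    rintro m e rfl; simp [mcCol]
  have q2 : ∀ m (e : MCVert V k), e = y m → e ≠ vx := by
    rintro m e rfl; simp
  have q3 : ∀ m (e : MCVert V k), e = y m → e ≠ vxbar := by
    rintro m e rfl; simp
  have q4 : (vx : MCVert V k) ≠ vxbar := by simp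
  exact mc_final hfin hcard (fun m e => e = y m) q1
    (fun m => ⟨y m, hym m, rfl⟩) vx vxbar hvx hvxbar q4 q2 q3

lemma mc_case_vy
    (hdom : ∀ t : MCVert V k, ∃ u ∈ D, u = t ∨ (mcGraph G c).Adj u t)
    (hind : ∀ a ∈ D, ∀ b ∈ D, a ≠ b → ¬ (mcGraph G c).Adj a b)
    (hfin : D.Finite) (hcard : D.ncard ≤ k + 1)
    (h : vy ∈ D ∨ vybar ∈ D) : False := by
  have hnadj : ∀ a ∈ D, ∀ b ∈ D, ¬(mcGraph G c).Adj a b :=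
    fun a ha b hb hab => hind a ha b hb hab.ne hab
  have hni : ∀ t, (mcGraph G c).Adj t vy → (mcGraph G c).Adj t vybar → t ∉ D := by
    intro t h1 h2 ht
    rcases h with h | h
    · exact hnadj t ht vy h h1
    · exact hnadj t ht vybar h h2
  have horig : ∀ v, orig v ∉ D := fun v =>
    hni _ (by simp [mc_adj, mcRel]) (by simp [mc_adj, mcRel])
  have hy : ∀ i, MCVert.y i ∉ D := fun i =>
    hni _ (by simp [mc_adj, mcRel]) (by simp [mc_adj, mcRel])
  have hvx : (vx : MCVert V k) ∉ D :=
    hni _ (by simp [mc_adj, mcRel]) (by simp [mc_adj, mcRel])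
  have hvxbar : (vxbar : MCVert V k) ∉ D :=
    hni _ (by simp [mc_adj, mcRel]) (by simp [mc_adj, mcRel])
  have hxy : ∀ i j hij b, (xy i j hij b : MCVert V k) ∉ D := fun i j hij b =>
    hni _ (by simp [mc_adj, mcRel]) (by simp [mc_adj, mcRel])
  have hhub : (hub : MCVert V k) ∉ D :=
    hni _ (by simp [mc_adj, mcRel]) (by simp [mc_adj, mcRel])
  have hvy : (vy : MCVert V k) ∈ D := by
    obtain ⟨e, heD, he⟩ := hdom vy
    rcases he with rfl | he
    · exact heD
    · exfalso
      rw [mc_adj] at he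
      obtain ⟨hne, hrel⟩ := he
      cases e <;> simp [mcRel] at hrel
      · exact horig _ heD
      · exact hy _ heD
      · exact hvx heD
      · exact hvxbar heD
      · exact hxy _ _ _ _ heD
      · exact hhub heD
  have hvybar : (vybar : MCVert V k) ∈ D := by
    obtain ⟨e, heD, he⟩ := hdom vybar
    rcases he with rfl | he
    · exact heD
    · exfalso
      rw [mc_adj] at he
      obtain ⟨hne, hrel⟩ := he
      cases e <;> simp [mcRel] at hrel
      · exact horig _ heD
      · exact hy _ heD
      · exact hvx heD
      · exact hvxbar heD
      · exact hxy _ _ _ _ heD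
      · exact hhub heD
  have hxm : ∀ m, (MCVert.x m : MCVert V k) ∈ D := by
    intro m
    obtain ⟨e, heD, he⟩ := hdom (MCVert.x m)
    rcases he with rfl | he
    · exact heD
    · exfalso
      rw [mc_adj] at he
      obtain ⟨hne, hrel⟩ := he
      cases e <;> simp [mcRel] at hrel
      · exact horig _ heD
      · exact hvx heD
      · exact hvxbar heD
      · exact hxy _ _ _ _ heD
  have q1 : ∀ m (e : MCVert V k), e = MCVert.x m → mcCol c e = some m := by
    rintro m e rfl; simp [mcCol]
  have q2 : ∀ m (e : MCVert V k), e = MCVert.x m → e ≠ vy := by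
    rintro m e rfl; simp
  have q3 : ∀ m (e : MCVert V k), e = MCVert.x m → e ≠ vybar := by
    rintro m e rfl; simp
  have q4 : (vy : MCVert V k) ≠ vybar := by simp
  exact mc_final hfin hcard (fun m e => e = MCVert.x m) q1
    (fun m => ⟨MCVert.x m, hxm m, rfl⟩) vy vybar hvy hvybar q4 q2 q3

lemma mc_case_xy
    (hdom : ∀ t : MCVert V k, ∃ u ∈ D, u = t ∨ (mcGraph G c).Adj u t)
    (hind : ∀ a ∈ D, ∀ b ∈ D, a ≠ b → ¬ (mcGraph G c).Adj a b)
    (hfin : D.Finite) (hcard : D.ncard ≤ k + 1)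
    (i j : Fin k) (hij : i ≠ j) (b : Bool)
    (h : (xy i j hij b : MCVert V k) ∈ D) : False := by
  have hnadj : ∀ a ∈ D, ∀ b ∈ D, ¬(mcGraph G c).Adj a b :=
    fun a ha b hb hab => hind a ha b hb hab.ne hab
  have hni : ∀ t, (mcGraph G c).Adj t (xy i j hij b) → t ∉ D := by
    intro t h1 ht
    exact hnadj t ht _ h h1
  have hvx : (vx : MCVert V k) ∉ D := hni _ (by simp [mc_adj, mcRel])
  have hvxbar : (vxbar : MCVert V k) ∉ D := hni _ (by simp [mc_adj, mcRel])
  have hvy : (vy : MCVert V k) ∉ D := hni _ (by simp [mc_adj, mcRel])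
  have hvybar : (vybar : MCVert V k) ∉ D := hni _ (by simp [mc_adj, mcRel])
  have hhub : (hub : MCVert V k) ∉ D := hni _ (by simp [mc_adj, mcRel])
  have hxi : (MCVert.x i : MCVert V k) ∉ D := hni _ (by simp [mc_adj, mcRel])
  have hyj : (MCVert.y j : MCVert V k) ∉ D := hni _ (by simp [mc_adj, mcRel])
  have hxyo : ∀ i' j' h' b', (i' ≠ i ∨ j' ≠ j) →
      (xy i' j' h' b' : MCVert V k) ∉ D := by
    intro i' j' h' b' hne'
    refine hni _ ?_
    rw [mc_adj]
    constructor
    · rcases hne' with hne' | hne' <;> simp [hne']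
    · exact Or.inl (by simpa [mcRel] using hne')
  have hother : (xy i j hij (!b) : MCVert V k) ∈ D := by
    obtain ⟨e, heD, he⟩ := hdom (xy i j hij (!b))
    rcases he with rfl | he
    · exact heD
    · exfalso
      rw [mc_adj] at he
      obtain ⟨hne, hrel⟩ := he
      cases e with
      | orig v => simp [mcRel] at hrel
      | x i' =>
        simp [mcRel] at hrel
        exact hxi (hrel ▸ heD)
      | y j' =>
        simp [mcRel] at hrel
        exact hyj (hrel ▸ heD)
      | vx => exact hvx heD
      | vxbar => exact hvxbar heD
      | vy => exact hvy heD
      | vybar => exact hvybar heD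
      | hub => exact hhub heD
      | xy i' j' h' b' =>
        simp only [mcRel] at hrel
        rcases hrel with (h1 | h1) | (h1 | h1)
        · exact hxyo i' j' h' b' (Or.inl h1) heD
        · exact hxyo i' j' h' b' (Or.inr h1) heD
        · exact hxyo i' j' h' b' (Or.inl (fun hh => h1 hh.symm)) heD
        · exact hxyo i' j' h' b' (Or.inr (fun hh => h1 hh.symm)) heD
  have hall : ∀ m : Fin k, ∃ e ∈ D,
      (e = MCVert.x m ∨ e = MCVert.y m ∨ ∃ v, e = orig v ∧ c v = m) := by
    intro m
    by_cases hmi : m = i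
    · subst hmi
      obtain ⟨e, heD, he⟩ := hdom (MCVert.y m)
      rcases he with rfl | he
      · exact ⟨_, heD, Or.inr (Or.inl rfl)⟩
      · rw [mc_adj] at he
        obtain ⟨hne, hrel⟩ := he
        cases e with
        | orig v =>
          simp [mcRel] at hrel
          exact ⟨_, heD, Or.inr (Or.inr ⟨v, rfl, hrel⟩)⟩
        | vy => exact absurd heD hvy
        | vybar => exact absurd heD hvybar
        | xy i' j' h' b' =>
          simp [mcRel] at hrel
          subst hrel
          exact absurd heD (hxyo i' m h' b' (Or.inr hij))
        | x i' => simp [mcRel] at hrel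
        | y j' => simp [mcRel] at hrel
        | vx => simp [mcRel] at hrel
        | vxbar => simp [mcRel] at hrel
        | hub => simp [mcRel] at hrel
    · obtain ⟨e, heD, he⟩ := hdom (MCVert.x m)
      rcases he with rfl | he
      · exact ⟨_, heD, Or.inl rfl⟩
      · rw [mc_adj] at he
        obtain ⟨hne, hrel⟩ := he
        cases e with
        | orig v =>
          simp [mcRel] at hrel
          exact ⟨_, heD, Or.inr (Or.inr ⟨v, rfl, hrel⟩)⟩
        | vx => exact absurd heD hvx
        | vxbar => exact absurd heD hvxbar
        | xy i' j' h' b' =>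
          simp [mcRel] at hrel
          subst hrel
          exact absurd heD (hxyo m j' h' b' (Or.inl hmi))
        | x i' => simp [mcRel] at hrel
        | y j' => simp [mcRel] at hrel
        | vy => simp [mcRel] at hrel
        | vybar => simp [mcRel] at hrel
        | hub => simp [mcRel] at hrel
  have q1 : ∀ m (e : MCVert V k),
      (e = MCVert.x m ∨ e = MCVert.y m ∨ ∃ v, e = orig v ∧ c v = m) →
      mcCol c e = some m := by
    rintro m e (rfl | rfl | ⟨v, rfl, hv⟩)
    · simp [mcCol]
    · simp [mcCol]
    · simp [mcCol, hv]
  have q2 : ∀ m (e : MCVert V k),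
      (e = MCVert.x m ∨ e = MCVert.y m ∨ ∃ v, e = orig v ∧ c v = m) →
      e ≠ xy i j hij b := by
    rintro m e (rfl | rfl | ⟨v, rfl, hv⟩) <;> simp
  have q3 : ∀ m (e : MCVert V k),
      (e = MCVert.x m ∨ e = MCVert.y m ∨ ∃ v, e = orig v ∧ c v = m) →
      e ≠ xy i j hij (!b) := by
    rintro m e (rfl | rfl | ⟨v, rfl, hv⟩) <;> simp
  have q4 : (xy i j hij b : MCVert V k) ≠ xy i j hij (!b) := by simp
  exact mc_final hfin hcard
    (fun m e => e = MCVert.x m ∨ e = MCVert.y m ∨ ∃ v, e = orig v ∧ c v = m)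
    q1 hall _ _ h hother q4 q2 q3

end Cases
/-- Let `G` be a graph whose vertex set is partitioned into nonempty color classes
`C_1, …, C_k` (given by a surjective coloring `c`), and let `G'` be the graph
obtained from `G` by the multicolored-independent-set construction. Then `G` has an
independent set containing exactly one vertex from each color class if and only if
`G'` has an independent dominating set of size at most `k + 1`. -/
theorem mcGraph_ids_iff_multicolored_independent_set {V : Type*} [Fintype V] {k : ℕ}
    (G : SimpleGraph V) (c : V → Fin k) (hc : Function.Surjective c) :
    (∃ I : Set V, (∀ a ∈ I, ∀ b ∈ I, a ≠ b → ¬ G.Adj a b) ∧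
        ∀ i : Fin k, ∃! v : V, v ∈ I ∧ c v = i) ↔
    (∃ D : Set (MCVert V k),
        (∀ t : MCVert V k, ∃ u ∈ D, u = t ∨ (mcGraph G c).Adj u t) ∧
        (∀ a ∈ D, ∀ b ∈ D, a ≠ b → ¬ (mcGraph G c).Adj a b) ∧
        D.Finite ∧ D.ncard ≤ k + 1) := by
  constructor
  · rintro ⟨I, hI, hmc⟩
    refine ⟨(orig '' I) ∪ {hub}, ?_, ?_, ?_, ?_⟩
    · intro t
      cases t with
      | orig w =>
        obtain ⟨v, ⟨hvI, hvc⟩, -⟩ := hmc (c w)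
        refine ⟨orig v, Or.inl ⟨v, hvI, rfl⟩, ?_⟩
        by_cases hvw : v = w
        · exact Or.inl (by rw [hvw])
        · exact Or.inr (by
            rw [mc_adj]
            exact ⟨by simp [hvw], Or.inl (Or.inr hvc)⟩)
      | x i =>
        obtain ⟨v, ⟨hvI, hvc⟩, -⟩ := hmc i
        exact ⟨orig v, Or.inl ⟨v, hvI, rfl⟩, Or.inr (by
          rw [mc_adj]
          exact ⟨by simp, Or.inl (by simp [mcRel, hvc])⟩)⟩
      | y i =>
        obtain ⟨v, ⟨hvI, hvc⟩, -⟩ := hmc i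
        exact ⟨orig v, Or.inl ⟨v, hvI, rfl⟩, Or.inr (by
          rw [mc_adj]
          exact ⟨by simp, Or.inl (by simp [mcRel, hvc])⟩)⟩
      | vx => exact ⟨hub, Or.inr rfl, Or.inr (by simp [mc_adj, mcRel])⟩
      | vxbar => exact ⟨hub, Or.inr rfl, Or.inr (by simp [mc_adj, mcRel])⟩
      | vy => exact ⟨hub, Or.inr rfl, Or.inr (by simp [mc_adj, mcRel])⟩
      | vybar => exact ⟨hub, Or.inr rfl, Or.inr (by simp [mc_adj, mcRel])⟩
      | xy i j hij b => exact ⟨hub, Or.inr rfl, Or.inr (by simp [mc_adj, mcRel])⟩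
      | hub => exact ⟨hub, Or.inr rfl, Or.inl rfl⟩
    · rintro a (⟨v, hvI, rfl⟩ | ha) b (⟨w, hwI, rfl⟩ | hb) hne hadj
      · rw [mc_adj] at hadj
        obtain ⟨-, hrel⟩ := hadj
        have hvw : v ≠ w := fun h => hne (by rw [h])
        have hgw : G.Adj v w ∨ c v = c w := by
          rcases hrel with h | h <;> simp [mcRel] at h
          · exact h
          · rcases h with h | h
            · exact Or.inl h.symm
            · exact Or.inr h.symm
        rcases hgw with h | h
        · exact hI v hvI w hwI hvw h
        · obtain ⟨u', -, huniq⟩ := hmc (c v)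
          exact hvw ((huniq v ⟨hvI, rfl⟩).trans (huniq w ⟨hwI, h.symm⟩).symm)
      · rw [Set.mem_singleton_iff] at hb
        subst hb
        rw [mc_adj] at hadj
        obtain ⟨-, hrel⟩ := hadj
        simp [mcRel] at hrel
      · rw [Set.mem_singleton_iff] at ha
        subst ha
        rw [mc_adj] at hadj
        obtain ⟨-, hrel⟩ := hadj
        simp [mcRel] at hrel
      · rw [Set.mem_singleton_iff] at ha hb
        exact hne (ha.trans hb.symm)
    · exact (I.toFinite.image _).union (Set.finite_singleton _)
    · have h1 : (orig '' I : Set (MCVert V k)).ncard = I.ncard :=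
        Set.ncard_image_of_injective _ (fun a b h => by injection h)
      have hinj : Set.InjOn c I := by
        intro v hv w hw hvw
        obtain ⟨u', -, huniq⟩ := hmc (c v)
        exact (huniq v ⟨hv, rfl⟩).trans (huniq w ⟨hw, hvw.symm⟩).symm
      have h2 : I.ncard ≤ k := by
        have hh : (c '' I).ncard = I.ncard := Set.ncard_image_of_injOn hinj
        have h3 : (c '' I).ncard ≤ (Set.univ : Set (Fin k)).ncard :=
          Set.ncard_le_ncard (Set.subset_univ _) Set.finite_univ
        rw [hh] at h3
        simpa [Set.ncard_univ] using h3
      calc (orig '' I ∪ {hub}).ncard ≤ (orig '' I : Set (MCVert V k)).ncard + 1 := by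
            rw [Set.union_singleton]
            exact Set.ncard_insert_le _ _
        _ ≤ k + 1 := by rw [h1]; omega
  · rintro ⟨D, hdom, hind, hfin, hcard⟩
    have hnadj : ∀ a ∈ D, ∀ b ∈ D, ¬(mcGraph G c).Adj a b :=
      fun a ha b hb hab => hind a ha b hb hab.ne hab
    have hhub : (hub : MCVert V k) ∈ D := by
      obtain ⟨e, heD, he⟩ := hdom hub
      rcases he with rfl | he
      · exact heD
      · exfalso
        rw [mc_adj] at he
        obtain ⟨hne, hrel⟩ := he
        cases e <;> simp [mcRel] at hrel
        · exact mc_case_vx hdom hind hfin hcard (Or.inl heD)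
        · exact mc_case_vx hdom hind hfin hcard (Or.inr heD)
        · exact mc_case_vy hdom hind hfin hcard (Or.inl heD)
        · exact mc_case_vy hdom hind hfin hcard (Or.inr heD)
        · exact mc_case_xy hdom hind hfin hcard _ _ _ _ heD
    have hcent : ∀ t, (mcGraph G c).Adj t hub → t ∉ D :=
      fun t h1 ht => hnadj t ht hub hhub h1
    have hvx : (vx : MCVert V k) ∉ D := hcent _ (by simp [mc_adj, mcRel])
    have hvxbar : (vxbar : MCVert V k) ∉ D := hcent _ (by simp [mc_adj, mcRel])
    have hvy : (vy : MCVert V k) ∉ D := hcent _ (by simp [mc_adj, mcRel])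
    have hvybar : (vybar : MCVert V k) ∉ D := hcent _ (by simp [mc_adj, mcRel])
    have hxy : ∀ i j hij b, (xy i j hij b : MCVert V k) ∉ D := fun i j hij b =>
      hcent _ (by simp [mc_adj, mcRel])
    have horig : ∀ i, ∃ v, orig v ∈ D ∧ c v = i := by
      intro i
      by_contra hno
      push_neg at hno
      have hyi : (y i : MCVert V k) ∈ D := by
        obtain ⟨e, heD, he⟩ := hdom (y i)
        rcases he with rfl | he
        · exact heD
        · exfalso
          rw [mc_adj] at he
          obtain ⟨hne, hrel⟩ := he
          cases e with
          | orig v =>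
            simp [mcRel] at hrel
            exact hno v heD hrel
          | vy => exact hvy heD
          | vybar => exact hvybar heD
          | xy i' j' h' b' => exact hxy _ _ _ _ heD
          | x i' => simp [mcRel] at hrel
          | y j' => simp [mcRel] at hrel
          | vx => simp [mcRel] at hrel
          | vxbar => simp [mcRel] at hrel
          | hub => simp [mcRel] at hrel
      have hall : ∀ m, ∃ e ∈ D, (e = MCVert.x m ∨ ∃ v, e = orig v ∧ c v = m) := by
        intro m
        obtain ⟨e, heD, he⟩ := hdom (MCVert.x m)
        rcases he with rfl | he
        · exact ⟨_, heD, Or.inl rfl⟩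
        · rw [mc_adj] at he
          obtain ⟨hne, hrel⟩ := he
          cases e with
          | orig v =>
            simp [mcRel] at hrel
            exact ⟨_, heD, Or.inr ⟨v, rfl, hrel⟩⟩
          | vx => exact absurd heD hvx
          | vxbar => exact absurd heD hvxbar
          | xy i' j' h' b' => exact absurd heD (hxy _ _ _ _)
          | x i' => simp [mcRel] at hrel
          | y j' => simp [mcRel] at hrel
          | vy => simp [mcRel] at hrel
          | vybar => simp [mcRel] at hrel
          | hub => simp [mcRel] at hrel
      have q1 : ∀ m (e : MCVert V k),
          (e = MCVert.x m ∨ ∃ v, e = orig v ∧ c v = m) → mcCol c e = some m := by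
        rintro m e (rfl | ⟨v, rfl, hv⟩)
        · simp [mcCol]
        · simp [mcCol, hv]
      have q2 : ∀ m (e : MCVert V k),
          (e = MCVert.x m ∨ ∃ v, e = orig v ∧ c v = m) → e ≠ hub := by
        rintro m e (rfl | ⟨v, rfl, hv⟩) <;> simp
      have q3 : ∀ m (e : MCVert V k),
          (e = MCVert.x m ∨ ∃ v, e = orig v ∧ c v = m) → e ≠ y i := by
        rintro m e (rfl | ⟨v, rfl, hv⟩) <;> simp
      exact mc_final hfin hcard
        (fun m e => e = MCVert.x m ∨ ∃ v, e = orig v ∧ c v = m)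
        q1 hall hub (y i) hhub hyi (by simp) q2 q3
    refine ⟨{v | orig v ∈ D}, ?_, ?_⟩
    · intro a ha b hb hne hadj
      exact hnadj _ ha _ hb (by
        rw [mc_adj]
        exact ⟨by simp [hne], Or.inl (Or.inl hadj)⟩)
    · intro i
      obtain ⟨v, hvD, hvc⟩ := horig i
      refine ⟨v, ⟨hvD, hvc⟩, ?_⟩
      rintro w ⟨hwD, hwc⟩
      by_contra hwv
      exact hnadj _ hwD _ hvD (by
        rw [mc_adj]
        exact ⟨by simp [hwv], Or.inl (Or.inr (by rw [hwc, hvc]))⟩)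
end

section
/- If G is a graph in which every two vertices are at distance at most 2, then in the duplication G' of G every two vertices are at distance at most 2, i.e., G' is a 2-club. -/
/-- The duplication `G'` of a graph `G`: the graph on vertex set `V × {1,2}`
(here `V × Bool`) in which `(v,i)` and `(w,j)` are adjacent if and only if either
`i = j` and `vw ∈ E(G)`, or `i ≠ j` and (`v = w` or `vw ∈ E(G)`). -/
def duplication {V : Type*} (G : SimpleGraph V) : SimpleGraph (V × Bool) where
  Adj a b := (a.2 = b.2 ∧ G.Adj a.1 b.1) ∨ (a.2 ≠ b.2 ∧ (a.1 = b.1 ∨ G.Adj a.1 b.1))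
  symm := by
    constructor
    rintro ⟨v, i⟩ ⟨w, j⟩ (⟨h1, h2⟩ | ⟨h1, h2⟩)
    · exact Or.inl ⟨h1.symm, h2.symm⟩
    · exact Or.inr ⟨h1.symm, h2.imp Eq.symm SimpleGraph.Adj.symm⟩
  loopless := by
    constructor
    rintro ⟨v, i⟩ (⟨_, h⟩ | ⟨h, _⟩)
    · exact G.irrefl h
    · exact h rfl

/-! Every edge `vw` of `G` lifts to an edge between any copy of `v` and any copy of `w`, and the
two copies of a vertex are adjacent. So a path of length at most 2 between `v` and `w` in `G`
lifts to one between `(v, i)` and `(w, j)`, the copy edge taking care of the case `v = w`. -/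

namespace duplication

variable {V : Type*} {G : SimpleGraph V}

theorem adj_iff {a b : V × Bool} :
    (duplication G).Adj a b ↔ G.Adj a.1 b.1 ∨ (a.1 = b.1 ∧ a.2 ≠ b.2) := by
  simp only [duplication]
  tauto

theorem adj_of_adj {v w : V} (h : G.Adj v w) (i j : Bool) :
    (duplication G).Adj (v, i) (w, j) :=
  adj_iff.2 (Or.inl h)

theorem adj_copy {i j : Bool} (h : i ≠ j) (v : V) : (duplication G).Adj (v, i) (v, j) :=
  adj_iff.2 (Or.inr ⟨rfl, h⟩)

end duplication

theorem duplication_two_club_general {V : Type*} (G : SimpleGraph V)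
    (hdiam : ∀ u v : V, u = v ∨ G.Adj u v ∨ ∃ x : V, G.Adj u x ∧ G.Adj x v) :
    ∀ a b : V × Bool, a = b ∨ (duplication G).Adj a b ∨
      ∃ w : V × Bool, (duplication G).Adj a w ∧ (duplication G).Adj w b := by
  rintro ⟨v, i⟩ ⟨w, j⟩
  rcases hdiam v w with rfl | hvw | ⟨x, hvx, hxw⟩
  · by_cases hij : i = j
    · exact Or.inl (hij ▸ rfl)
    · exact Or.inr (Or.inl (duplication.adj_copy hij v))
  · exact Or.inr (Or.inl (duplication.adj_of_adj hvw i j))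
  · exact Or.inr (Or.inr
      ⟨(x, i), duplication.adj_of_adj hvx i i, duplication.adj_of_adj hxw i j⟩)

/-- If `G` is a graph in which every two vertices are at distance at most 2, then
in the duplication `G'` of `G` every two vertices are at distance at most 2,
i.e., `G'` is a 2-club. -/
theorem duplication_two_club {V : Type*} [Fintype V] (G : SimpleGraph V)
    (hdiam : ∀ u v : V, u = v ∨ G.Adj u v ∨ ∃ x : V, G.Adj u x ∧ G.Adj x v) :
    ∀ a b : V × Bool, a = b ∨ (duplication G).Adj a b ∨
      ∃ w : V × Bool, (duplication G).Adj a w ∧ (duplication G).Adj w b :=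
  duplication_two_club_general G hdiam
end

section
/- Let G be a graph and let G' be the duplication of G. Then for every nonnegative integer k, G has a dominating set of size at most k if and only if G' admits a Roman dominating function of weight at most 2k. -/
/-!
Two vertices of the duplication `G'` are adjacent exactly when they are distinct and their
projections to `G` are equal or adjacent. Hence a dominating set `D` of `G` yields the Roman
dominating function of `G'` that is `2` on the copy `D × {true}` and `0` elsewhere. Conversely,
if `f` is a Roman dominating function of `G'`, the vertices `v` with `f (v, true) + f (v, false) ≥ 2`
dominate `G`, and there are at most half the weight of `f` of them: if `v` is not one of them,
one of its copies has value `0`, and that copy's neighbour of value `2` projects into `N[v]`.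
-/

theorem Set.sum_indicator_const {α M : Type*} [Fintype α] [AddCommMonoid M] (s : Set α) (c : M) :
    ∑ a, s.indicator (fun _ => c) a = s.ncard • c := by
  classical
  rw [Set.ncard_eq_toFinset_card', ← Set.filter_mem_univ_eq_toFinset, Finset.card_filter,
    Finset.sum_smul]
  simp only [Set.indicator_apply, ite_smul, one_smul, zero_smul]

theorem two_mul_ncard_le_sum_prod_bool {V : Type*} [Fintype V] (f : V × Bool → ℕ) :
    2 * {v | 2 ≤ f (v, true) + f (v, false)}.ncard ≤ ∑ a, f a := by
  classical
  rw [Fintype.sum_prod_type, Set.ncard_eq_toFinset_card', mul_comm, ← smul_eq_mul]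
  calc _ ≤ ∑ v ∈ {v | 2 ≤ f (v, true) + f (v, false)}.toFinset, ∑ i, f (v, i) :=
        Finset.card_nsmul_le_sum _ _ _ fun v hv => by simpa using hv
    _ ≤ _ := Finset.sum_le_sum_of_subset (Finset.subset_univ _)

namespace SimpleGraph

variable {V W : Type*} (G : SimpleGraph V)

def IsDominating (D : Set V) : Prop := ∀ v, ∃ u ∈ D, u = v ∨ G.Adj u v

/-- The range condition `f ≤ 2` of a Roman dominating function is kept separate. -/
def IsRomanDominating (H : SimpleGraph W) (f : W → ℕ) : Prop :=
  ∀ a, f a = 0 → ∃ b, H.Adj a b ∧ f b = 2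

variable {G}

theorem duplication_adj_iff {u v : V} {i j : Bool} :
    (duplication G).Adj (u, i) (v, j) ↔ (u = v ∨ G.Adj u v) ∧ (u, i) ≠ (v, j) := by
  by_cases hij : i = j
  · subst hij
    simp only [duplication, ne_eq, Prod.mk.injEq, and_true, true_and, not_true_eq_false,
      false_and, or_false]
    exact ⟨fun h => ⟨Or.inr h, h.ne⟩, fun ⟨h, hne⟩ => h.resolve_left hne⟩
  · simp [duplication, hij]

theorem IsDominating.isRomanDominating_duplication {D : Set V} (hD : G.IsDominating D) :
    (duplication G).IsRomanDominating ((D ×ˢ {true}).indicator fun _ => 2) := by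
  rintro ⟨v, i⟩ hvi
  obtain ⟨u, huD, huv⟩ := hD v
  refine ⟨(u, true), duplication_adj_iff.2 ⟨huv.imp Eq.symm Adj.symm, ?_⟩, by simp [huD]⟩
  rintro ⟨rfl, rfl⟩
  simp [huD] at hvi

theorem IsRomanDominating.isDominating_duplication {f : V × Bool → ℕ}
    (hf : (duplication G).IsRomanDominating f) :
    G.IsDominating {v | 2 ≤ f (v, true) + f (v, false)} := by
  intro v
  by_cases hv : 2 ≤ f (v, true) + f (v, false)
  · exact ⟨v, hv, Or.inl rfl⟩
  obtain ⟨i, hi⟩ : ∃ i, f (v, i) = 0 := by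
    by_contra! h
    have := h true
    have := h false
    omega
  obtain ⟨⟨w, j⟩, hadj, hw⟩ := hf (v, i) hi
  refine ⟨w, ?_, (duplication_adj_iff.1 hadj).1.imp Eq.symm Adj.symm⟩
  cases j <;> simp only [Set.mem_ofPred_eq, hw] <;> omega

end SimpleGraph

/-- Let `G` be a graph and let `G'` be the duplication of `G`. Then for every
nonnegative integer `k`, `G` has a dominating set of size at most `k` if and only
if `G'` admits a Roman dominating function (a function `f : V(G') → {0,1,2}` such
that every vertex with value 0 has a neighbor with value 2) of weight at most `2k`. -/
theorem duplication_dominating_iff_roman {V : Type*} [Fintype V]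
    (G : SimpleGraph V) (k : ℕ) :
    (∃ D : Set V, (∀ v : V, ∃ u ∈ D, u = v ∨ G.Adj u v) ∧ D.ncard ≤ k) ↔
    (∃ f : V × Bool → ℕ, (∀ a, f a ≤ 2) ∧
      (∀ a, f a = 0 → ∃ b, (duplication G).Adj a b ∧ f b = 2) ∧
      ∑ a : V × Bool, f a ≤ 2 * k) := by
  constructor
  · rintro ⟨D, hD, hk⟩
    refine ⟨_, ?_, SimpleGraph.IsDominating.isRomanDominating_duplication hD, ?_⟩
    · exact fun a => Set.indicator_apply_le' (fun _ => le_rfl) (fun _ => Nat.zero_le _)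
    · rw [Set.sum_indicator_const, Set.ncard_prod, Set.ncard_singleton, smul_eq_mul]
      omega
  · rintro ⟨f, -, hf, hw⟩
    refine ⟨_, SimpleGraph.IsRomanDominating.isDominating_duplication hf, ?_⟩
    have := two_mul_ncard_le_sum_prod_bool f
    omega
end
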